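/- Let A ∈ ℝ^{m×n}, B ∈ ℝ^{p×n}, u ∈ ℝ^m with ‖u‖ = 1, x ∈ ℝ^n, and α > 0, β > 0 with α² + β² = 1 be such that A x = α u, ‖B x‖ = β, and β² Aᵀ u = α BᵀB x. Set σ = α/β and y = (1/√2)·(u, x/β) ∈ ℝ^{m+n} (stacked vector). Let Ê, F̂ be real (m+n)×(m+n) matrices, σ̂ ∈ ℝ, and s ∈ ℝ^{m+n} with yᵀ B̂ s = 0, (Â + Ê)(y + s) = σ̂ (B̂ + F̂)(y + s), and yᵀ (B̂ + F̂)(y + s) ≠ 0. Set δ₁ = ‖s‖/‖y‖. Then χ(σ̂, σ) ≤ ( (‖x‖² + β²)(1 + δ₁) / (2β) ) · √(‖Ê‖² + ‖F̂‖²). -/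

import Mathlib

/-!
The unperturbed pencil satisfies `Â y = σ B̂ y` with `yᵀ B̂ y = 1`, and `Â`, `B̂` are symmetric.
Pairing the perturbed eigen-equation with `y` and using `yᵀ B̂ s = 0` gives
`σ̂ (1 + f) = σ + e` with `e = yᵀ Ê (y + s)`, `f = yᵀ F̂ (y + s)`. Hence `σ̂ - σ = e - σ̂ f`, and
Cauchy–Schwarz in `ℝ²` yields `χ(σ̂, σ) ≤ √(e² + f²) / √(1 + σ²) = β √(e² + f²)`. Finally
`|e| ≤ ‖Ê‖ ‖y‖ ‖y + s‖`, likewise for `f`, and `2 β² ‖y‖² = ‖x‖² + β²`.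
-/

open Matrix

/-- The spectral (ℓ²-operator) norm of a real matrix. -/
noncomputable def specNorm {ι κ : Type*} [Fintype ι] [Fintype κ] [DecidableEq κ]
    (A : Matrix ι κ ℝ) : ℝ :=
  ‖LinearMap.toContinuousLinearMap (Matrix.toEuclideanLin A)‖

/-- The chordal distance between two real numbers. -/
noncomputable def chordal (a b : ℝ) : ℝ :=
  |a - b| / (Real.sqrt (1 + a ^ 2) * Real.sqrt (1 + b ^ 2))

open scoped RealInnerProductSpace

theorem chordal_le_of_mul_one_add_eq {a b e f : ℝ} (h : a * (1 + f) = b + e) :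
    chordal a b ≤ √(e ^ 2 + f ^ 2) / √(1 + b ^ 2) := by
  have hab : |a - b| ≤ √(e ^ 2 + f ^ 2) * √(1 + a ^ 2) := by
    rw [← Real.sqrt_mul (by positivity)]
    apply Real.abs_le_sqrt
    have hdiff : a - b = e - a * f := by linear_combination h
    rw [hdiff]
    -- Lagrange's identity: `(1 + a²)(e² + f²) - (e - a f)² = (a e + f)²`
    nlinarith [sq_nonneg (a * e + f)]
  rw [chordal, ← div_div]
  gcongr
  rwa [div_le_iff₀ (by positivity)]

theorem sqrt_sq_add_sq_le {e f ε φ t : ℝ} (he : |e| ≤ ε * t) (hf : |f| ≤ φ * t) (ht : 0 ≤ t) :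
    √(e ^ 2 + f ^ 2) ≤ √(ε ^ 2 + φ ^ 2) * t := by
  rw [← Real.sqrt_sq ht, ← Real.sqrt_mul (by positivity)]
  apply Real.sqrt_le_sqrt
  have he2 := sq_le_sq' (abs_le.mp he).1 (abs_le.mp he).2
  have hf2 := sq_le_sq' (abs_le.mp hf).1 (abs_le.mp hf).2
  linear_combination he2 + hf2

section InnerProductSpace

variable {E : Type*} [NormedAddCommGroup E] [InnerProductSpace ℝ E]

theorem abs_inner_apply_le {T : E →ₗ[ℝ] E} {ε : ℝ} (hT : ∀ v, ‖T v‖ ≤ ε * ‖v‖) (y w : E) :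
    |⟪y, T w⟫| ≤ ε * (‖y‖ * ‖w‖) :=
  calc |⟪y, T w⟫| ≤ ‖y‖ * ‖T w‖ := abs_real_inner_le_norm _ _
    _ ≤ ‖y‖ * (ε * ‖w‖) := by gcongr; exact hT w
    _ = ε * (‖y‖ * ‖w‖) := by ring

variable {A B F G : E →ₗ[ℝ] E} {y s : E} {σ σh : ℝ}

theorem LinearMap.IsSymmetric.mul_one_add_inner_eq (hA : A.IsSymmetric) (hB : B.IsSymmetric)
    (hy : A y = σ • B y) (hyBy : ⟪y, B y⟫ = 1) (hs : ⟪y, B s⟫ = 0)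
    (heig : (A + F) (y + s) = σh • (B + G) (y + s)) :
    σh * (1 + ⟪y, G (y + s)⟫) = σ + ⟪y, F (y + s)⟫ := by
  have hyB : ⟪y, B (y + s)⟫ = 1 := by rw [map_add, inner_add_right, hyBy, hs, add_zero]
  have hyA : ⟪y, A (y + s)⟫ = σ := by
    rw [← hA, hy, real_inner_smul_left, hB, hyB, mul_one]
  have := congrArg (⟪y, ·⟫) heig
  simp only [LinearMap.add_apply, inner_add_right, real_inner_smul_right, hyA, hyB] at this
  linarith

theorem chordal_le_of_perturbed_eigenpair (hA : A.IsSymmetric) (hB : B.IsSymmetric)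
    (hy : A y = σ • B y) (hyBy : ⟪y, B y⟫ = 1) (hs : ⟪y, B s⟫ = 0)
    (heig : (A + F) (y + s) = σh • (B + G) (y + s)) {ε φ : ℝ}
    (hF : ∀ v, ‖F v‖ ≤ ε * ‖v‖) (hG : ∀ v, ‖G v‖ ≤ φ * ‖v‖) :
    chordal σh σ ≤ √(ε ^ 2 + φ ^ 2) * (‖y‖ * ‖y + s‖) / √(1 + σ ^ 2) :=
  (chordal_le_of_mul_one_add_eq (hA.mul_one_add_inner_eq hB hy hyBy hs heig)).trans <|
    div_le_div_of_nonneg_right (sqrt_sq_add_sq_le (abs_inner_apply_le hF _ _)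
      (abs_inner_apply_le hG _ _) (by positivity)) (Real.sqrt_nonneg _)

end InnerProductSpace

theorem norm_toEuclideanLin_apply_le {ι κ : Type*} [Fintype ι] [Fintype κ] [DecidableEq κ]
    (M : Matrix ι κ ℝ) (v : EuclideanSpace ℝ κ) :
    ‖toEuclideanLin M v‖ ≤ specNorm M * ‖v‖ :=
  (LinearMap.toContinuousLinearMap (toEuclideanLin M)).le_opNorm v

theorem EuclideanSpace.ofLp_dotProduct_ofLp_self {ι : Type*} [Fintype ι] (a : EuclideanSpace ℝ ι) :
    a.ofLp ⬝ᵥ a.ofLp = ‖a‖ ^ 2 := by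
  rw [← real_inner_self_eq_norm_sq, EuclideanSpace.inner_eq_star_dotProduct, star_trivial]

section AugmentedPencil

variable {ι κ μ : Type*}

theorem isHermitian_fromBlocks_zero_transpose (A : Matrix ι κ ℝ) :
    (fromBlocks 0 A Aᵀ 0).IsHermitian :=
  isHermitian_zero.fromBlocks (conjTranspose_eq_transpose_of_trivial A) isHermitian_zero

theorem isHermitian_fromBlocks_one_transpose_mul [DecidableEq ι] [Fintype μ] (B : Matrix μ κ ℝ) :
    (fromBlocks 1 0 0 (Bᵀ * B) : Matrix (ι ⊕ κ) (ι ⊕ κ) ℝ).IsHermitian := by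
  refine isHermitian_one.fromBlocks conjTranspose_zero ?_
  simpa [conjTranspose_eq_transpose_of_trivial] using isHermitian_conjTranspose_mul_self B

variable [Fintype ι] [Fintype κ] [Fintype μ]

theorem sumElim_dotProduct_fromBlocks_mulVec_sumElim [DecidableEq ι] {R : Type*} [CommSemiring R]
    (B : Matrix μ κ R) (u : ι → R) (v : κ → R) :
    Sum.elim u v ⬝ᵥ (fromBlocks 1 0 0 (Bᵀ * B) *ᵥ Sum.elim u v) =
      u ⬝ᵥ u + (B *ᵥ v) ⬝ᵥ (B *ᵥ v) := by
  simp [fromBlocks_mulVec, ← mulVec_mulVec, dotProduct_mulVec, vecMul_transpose]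

noncomputable def augmentedVec (u : EuclideanSpace ℝ ι) (x : EuclideanSpace ℝ κ) (β : ℝ) :
    EuclideanSpace ℝ (ι ⊕ κ) :=
  (√2)⁻¹ • WithLp.toLp 2 (Sum.elim u.ofLp (β⁻¹ • x.ofLp))

variable [DecidableEq ι] [DecidableEq κ] (A : Matrix ι κ ℝ) (B : Matrix μ κ ℝ)
  {u : EuclideanSpace ℝ ι} {x : EuclideanSpace ℝ κ} {α β : ℝ}

theorem toEuclideanLin_fromBlocks_augmentedVec (hβ : β ≠ 0) (hAx : toEuclideanLin A x = α • u)
    (hAtu : β ^ 2 • toEuclideanLin Aᵀ u = α • toEuclideanLin (Bᵀ * B) x) :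
    toEuclideanLin (fromBlocks 0 A Aᵀ 0) (augmentedVec u x β) =
      (α / β) • toEuclideanLin (fromBlocks 1 0 0 (Bᵀ * B)) (augmentedVec u x β) := by
  replace hAx := congrArg WithLp.ofLp hAx
  replace hAtu := congrArg WithLp.ofLp hAtu
  simp only [ofLp_toLpLin, toLin'_apply, WithLp.ofLp_smul] at hAx hAtu
  rw [augmentedVec, map_smul, map_smul, smul_comm]
  congr 1
  apply WithLp.ofLp_injective
  ext (i | j)
  · simp only [toLpLin_toLp, toLin'_apply, fromBlocks_mulVec, Sum.elim_comp_inl, zero_mulVec,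
      Sum.elim_comp_inr, mulVec_smul, hAx, zero_add, smul_zero, add_zero, Sum.elim_inl,
      Pi.smul_apply, smul_eq_mul, one_mulVec, PiLp.smul_apply]
    ring
  · have := congrFun hAtu j
    simp only [Pi.smul_apply, smul_eq_mul, toLpLin_toLp, toLin'_apply, fromBlocks_mulVec,
      Sum.elim_comp_inl, zero_mulVec, Sum.elim_comp_inr, mulVec_smul, zero_add, smul_zero, add_zero,
      Sum.elim_inr, one_mulVec, PiLp.smul_apply] at this ⊢
    field_simp
    linear_combination this

theorem inner_augmentedVec_fromBlocks_one (hβ : β ≠ 0) (hu : ‖u‖ = 1)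
    (hBx : ‖toEuclideanLin B x‖ = β) :
    ⟪augmentedVec u x β, toEuclideanLin (fromBlocks 1 0 0 (Bᵀ * B)) (augmentedVec u x β)⟫ = 1 := by
  replace hBx : (B *ᵥ x.ofLp) ⬝ᵥ (B *ᵥ x.ofLp) = β ^ 2 := by
    rw [← hBx, ← EuclideanSpace.ofLp_dotProduct_ofLp_self]; rfl
  rw [augmentedVec, map_smul, real_inner_smul_left, real_inner_smul_right,
    EuclideanSpace.inner_eq_star_dotProduct, star_trivial, dotProduct_comm, ofLp_toLpLin,
    toLin'_apply, WithLp.ofLp_toLp, sumElim_dotProduct_fromBlocks_mulVec_sumElim, mulVec_smul,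
    smul_dotProduct, dotProduct_smul, hBx, EuclideanSpace.ofLp_dotProduct_ofLp_self, hu,
    smul_eq_mul, smul_eq_mul]
  field_simp
  norm_num

omit [DecidableEq ι] [DecidableEq κ] in
theorem norm_augmentedVec_sq (hu : ‖u‖ = 1) (hβ : β ≠ 0) :
    2 * β ^ 2 * ‖augmentedVec u x β‖ ^ 2 = ‖x‖ ^ 2 + β ^ 2 := by
  rw [augmentedVec, norm_smul, mul_pow,
    ← EuclideanSpace.ofLp_dotProduct_ofLp_self (WithLp.toLp 2 _), sumElim_dotProduct_sumElim,
    smul_dotProduct, dotProduct_smul, EuclideanSpace.ofLp_dotProduct_ofLp_self,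
    EuclideanSpace.ofLp_dotProduct_ofLp_self, hu]
  simp only [norm_inv, Real.norm_eq_abs, inv_pow, sq_abs, Nat.ofNat_nonneg, Real.sq_sqrt, one_pow,
    smul_eq_mul]
  field_simp
  ring

end AugmentedPencil

theorem sqrt_one_add_div_sq {α β : ℝ} (hαβ : α ^ 2 + β ^ 2 = 1) (hβ : 0 < β) :
    √(1 + (α / β) ^ 2) = β⁻¹ := by
  rw [Real.sqrt_eq_iff_mul_self_eq_of_pos (inv_pos.mpr hβ)]
  field_simp
  linear_combination -hαβ

theorem stmt_5_general {m n p : ℕ}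
    (A : Matrix (Fin m) (Fin n) ℝ) (B : Matrix (Fin p) (Fin n) ℝ)
    (u : EuclideanSpace ℝ (Fin m)) (x : EuclideanSpace ℝ (Fin n))
    (α β : ℝ) (hβ : 0 < β) (hαβ : α ^ 2 + β ^ 2 = 1)
    (hu : ‖u‖ = 1)
    (hAx : Matrix.toEuclideanLin A x = α • u)
    (hBx : ‖Matrix.toEuclideanLin B x‖ = β)
    (hAtu : β ^ 2 • Matrix.toEuclideanLin Aᵀ u = α • Matrix.toEuclideanLin (Bᵀ * B) x)
    (σ : ℝ) (hσ : σ = α / β)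
    (Ahat Bhat Ehat Fhat : Matrix (Fin m ⊕ Fin n) (Fin m ⊕ Fin n) ℝ)
    (hAhat : Ahat = Matrix.fromBlocks 0 A Aᵀ 0)
    (hBhat : Bhat = Matrix.fromBlocks 1 0 0 (Bᵀ * B))
    (y : EuclideanSpace ℝ (Fin m ⊕ Fin n))
    (hy : ∀ i, y i = (Real.sqrt 2)⁻¹ * Sum.elim (fun j => u j) (fun j => x j / β) i)
    (σh : ℝ) (s : EuclideanSpace ℝ (Fin m ⊕ Fin n))
    (hs : (inner ℝ y (Matrix.toEuclideanLin Bhat s) : ℝ) = 0)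
    (heig : Matrix.toEuclideanLin (Ahat + Ehat) (y + s)
        = σh • Matrix.toEuclideanLin (Bhat + Fhat) (y + s)) :
    chordal σh σ ≤
      (‖x‖ ^ 2 + β ^ 2) * (1 + ‖s‖ / ‖y‖) / (2 * β) *
        Real.sqrt (specNorm Ehat ^ 2 + specNorm Fhat ^ 2) := by
  have hyv : y = augmentedVec u x β := by
    ext (j | j) <;> simp [hy, augmentedVec, div_eq_inv_mul]
  subst hyv hAhat hBhat hσ
  rw [map_add toEuclideanLin, map_add toEuclideanLin] at heig
  have hbound := chordal_le_of_perturbed_eigenpair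
    (isSymmetric_toEuclideanLin_iff.mpr (isHermitian_fromBlocks_zero_transpose A))
    (isSymmetric_toEuclideanLin_iff.mpr (isHermitian_fromBlocks_one_transpose_mul B))
    (toEuclideanLin_fromBlocks_augmentedVec A B hβ.ne' hAx hAtu)
    (inner_augmentedVec_fromBlocks_one B hβ.ne' hu hBx) hs heig
    (norm_toEuclideanLin_apply_le Ehat) (norm_toEuclideanLin_apply_le Fhat)
  have hnorm := norm_augmentedVec_sq (x := x) hu hβ.ne'
  have hy0 : 0 < ‖augmentedVec u x β‖ := by
    refine norm_pos_iff.mpr fun h => ?_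
    rw [h, norm_zero] at hnorm
    nlinarith
  refine hbound.trans ?_
  rw [sqrt_one_add_div_sq hαβ hβ, ← hnorm]
  calc _ ≤ √(specNorm Ehat ^ 2 + specNorm Fhat ^ 2) *
        (‖augmentedVec u x β‖ * (‖augmentedVec u x β‖ + ‖s‖)) / β⁻¹ := by
        gcongr; exact norm_add_le _ _
    _ = _ := by field_simp

/-- accuracy estimate for the approximate generalized singular value
recovered from a perturbed eigenpair of the first augmented pair `(Â, B̂)`. -/
theorem stmt_5 {m n p : ℕ}
    (A : Matrix (Fin m) (Fin n) ℝ) (B : Matrix (Fin p) (Fin n) ℝ)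
    (u : EuclideanSpace ℝ (Fin m)) (x : EuclideanSpace ℝ (Fin n))
    (α β : ℝ) (hα : 0 < α) (hβ : 0 < β) (hαβ : α ^ 2 + β ^ 2 = 1)
    (hu : ‖u‖ = 1)
    (hAx : Matrix.toEuclideanLin A x = α • u)
    (hBx : ‖Matrix.toEuclideanLin B x‖ = β)
    (hAtu : β ^ 2 • Matrix.toEuclideanLin Aᵀ u = α • Matrix.toEuclideanLin (Bᵀ * B) x)
    (σ : ℝ) (hσ : σ = α / β)
    (Ahat Bhat Ehat Fhat : Matrix (Fin m ⊕ Fin n) (Fin m ⊕ Fin n) ℝ)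
    (hAhat : Ahat = Matrix.fromBlocks 0 A Aᵀ 0)
    (hBhat : Bhat = Matrix.fromBlocks 1 0 0 (Bᵀ * B))
    (y : EuclideanSpace ℝ (Fin m ⊕ Fin n))
    (hy : ∀ i, y i = (Real.sqrt 2)⁻¹ * Sum.elim (fun j => u j) (fun j => x j / β) i)
    (σh : ℝ) (s : EuclideanSpace ℝ (Fin m ⊕ Fin n))
    (hs : (inner ℝ y (Matrix.toEuclideanLin Bhat s) : ℝ) = 0)
    (heig : Matrix.toEuclideanLin (Ahat + Ehat) (y + s)
        = σh • Matrix.toEuclideanLin (Bhat + Fhat) (y + s))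
    (hden : (inner ℝ y (Matrix.toEuclideanLin (Bhat + Fhat) (y + s)) : ℝ) ≠ 0) :
    chordal σh σ ≤
      (‖x‖ ^ 2 + β ^ 2) * (1 + ‖s‖ / ‖y‖) / (2 * β) *
        Real.sqrt (specNorm Ehat ^ 2 + specNorm Fhat ^ 2) :=
  stmt_5_general A B u x α β hβ hαβ hu hAx hBx hAtu σ hσ Ahat Bhat Ehat Fhat hAhat hBhat y hy σh s
    hs heig
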